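/- Let q : X → Y be a simplicial map where Y is the nerve of a groupoid (a 1-groupoid). Then q is a simplicial fibration (all relative horn maps d^q_{n,k} : X_n → X_{n,k} ×_{Y_{n,k}} Y_n are surjective) if and only if X is a Kan complex and the two face maps d_1, d_0 : X_1 → X_0 are fiber-wise surjective over d_0, d_1 : Y_1 → Y_0 respectively (i.e., for every x ∈ X_0 and every g ∈ Y_1 with appropriate endpoint q(x), there is a lift in X_1). -/

import Mathlib

/-!
Since `Y` is the nerve of a groupoid, horns of dimension at least two have unique fillers in `Y`.
Hence in those dimensions any filler in `X` of a horn is automatically a lift over the given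
simplex of `Y`, so relative horn lifting there is just horn filling in `X`; conversely a fibration
over a Kan complex has Kan total space. A one-dimensional horn `Λ[1, i]` is the single vertex `i`
of `Δ[1]`, so lifting against `Λ[1, i] ⟶ Δ[1]` is lifting an edge of `Y` with a prescribed
endpoint, which is the fiber-wise surjectivity of the face `d_j`, `j ≠ i`.
-/

open CategoryTheory Simplicial SSet Opposite

/-- Restriction of a simplex (as a map from the standard simplex) along `α : [k] → [n]`. -/
def restr {X : SSet} {k n : ℕ} (α : SimplexCategory.mk k ⟶ SimplexCategory.mk n)
    (x : Δ[n] ⟶ X) : Δ[k] ⟶ X :=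
  SSet.stdSimplex.map α ≫ x

/-- The initial inclusion `σ_k : [k] → [n]`. -/
def initialIncl (k n : ℕ) (h : k ≤ n) : SimplexCategory.mk k ⟶ SimplexCategory.mk n :=
  SimplexCategory.mkHom
    ⟨fun i => ⟨(i : ℕ), by have := i.isLt; omega⟩,
     fun a b hab => by simp only [Fin.le_def] at hab ⊢; omega⟩

/-- `q : X ⟶ Y` is a simplicial fibration: every relative horn-lifting problem has a solution. -/
def IsFibration {X Y : SSet} (q : X ⟶ Y) : Prop :=
  ∀ (n : ℕ) (i : Fin (n + 2)) (h : (Λ[n + 1, i] : SSet) ⟶ X) (y : Δ[n + 1] ⟶ Y),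
    h ≫ q = Λ[n + 1, i].ι ≫ y →
      ∃ x : Δ[n + 1] ⟶ X, Λ[n + 1, i].ι ≫ x = h ∧ x ≫ q = y

/-- `C` is a cleavage for `q`: every relative `(n,k)`-horn with `k < n` has a unique filling
in `C`. -/
def IsCleavage {X Y : SSet} (q : X ⟶ Y) (C : ∀ n, Set (Δ[n] ⟶ X)) : Prop :=
  ∀ (n : ℕ) (i : Fin (n + 2)), (i : ℕ) < n + 1 →
    ∀ (h : (Λ[n + 1, i] : SSet) ⟶ X) (y : Δ[n + 1] ⟶ Y),
      h ≫ q = Λ[n + 1, i].ι ≫ y →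
        ∃! x : Δ[n + 1] ⟶ X, x ∈ C (n + 1) ∧ Λ[n + 1, i].ι ≫ x = h ∧ x ≫ q = y

/-- `C` is flat over `S ⊆ X_0`. -/
def FlatOver {X Y : SSet} (q : X ⟶ Y) (C : ∀ n, Set (Δ[n] ⟶ X)) (S : Set (Δ[0] ⟶ X)) : Prop :=
  ∀ (n : ℕ) (w : Δ[n + 1] ⟶ X), w ∈ C (n + 1) →
    restr (initialIncl 0 (n + 1) (by omega)) w ∈ S →
    (∀ (k : ℕ) (hk : k + 1 ≤ n + 1), restr (initialIncl (k + 1) (n + 1) hk) w ∈ C (k + 1)) →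
    (∀ i : Fin (n + 1), restr (SimplexCategory.δ i.succ) w ∈ C n) →
    restr (SimplexCategory.δ (0 : Fin (n + 2))) w ∈ C n

section

variable {C : Type*} [Category C] {A B X Y : C}

theorem hasLiftingProperty_iff_exists_lift (i : A ⟶ B) (p : X ⟶ Y) :
    HasLiftingProperty i p ↔
      ∀ (f : A ⟶ X) (g : B ⟶ Y), f ≫ p = i ≫ g → ∃ l, i ≫ l = f ∧ l ≫ p = g := by
  refine ⟨fun _ f g w => ⟨(CommSq.mk w).lift, by simp, by simp⟩, fun h => ⟨fun {f g} sq => ?_⟩⟩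
  obtain ⟨l, hl, hr⟩ := h f g sq.w
  exact CommSq.HasLift.mk' ⟨l, hl, hr⟩

theorem exists_extension_of_hasLiftingProperty {i : A ⟶ B} (p : X ⟶ Y) [HasLiftingProperty i p]
    (hY : ∀ g : A ⟶ Y, ∃ g' : B ⟶ Y, i ≫ g' = g) (f : A ⟶ X) : ∃ l : B ⟶ X, i ≫ l = f := by
  obtain ⟨g, hg⟩ := hY (f ≫ p)
  exact ⟨(CommSq.mk hg.symm).lift, by simp⟩

theorem hasLiftingProperty_of_exists_extension {i : A ⟶ B} (p : X ⟶ Y)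
    (hX : ∀ f : A ⟶ X, ∃ l : B ⟶ X, i ≫ l = f)
    (hY : ∀ g g' : B ⟶ Y, i ≫ g = i ≫ g' → g = g') : HasLiftingProperty i p := by
  refine (hasLiftingProperty_iff_exists_lift i p).2 fun f g w => ?_
  obtain ⟨l, hl⟩ := hX f
  exact ⟨l, hl, hY _ _ (by rw [← Category.assoc, hl, w])⟩

end

namespace SSet

theorem hasLiftingProperty_stdSimplex_δ_iff {X Y : SSet} {n : ℕ} (j : Fin (n + 2)) (q : X ⟶ Y) :
    HasLiftingProperty (stdSimplex.δ j) q ↔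
      ∀ (x : X _⦋n⦌) (g : Y _⦋n + 1⦌), Y.δ j g = q.app _ x →
        ∃ x' : X _⦋n + 1⦌, X.δ j x' = x ∧ q.app _ x' = g := by
  rw [hasLiftingProperty_iff_exists_lift]
  constructor
  · intro h x g hg
    obtain ⟨l, hl, hq⟩ := h (yonedaEquiv.symm x) (yonedaEquiv.symm g) (by
      rw [yonedaEquiv_symm_comp, stdSimplex.δ_comp_yonedaEquiv_symm, hg])
    refine ⟨yonedaEquiv l, ?_, ?_⟩
    · rw [← stdSimplex.yonedaEquiv_δ_comp, hl, Equiv.apply_symm_apply]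
    · rw [← yonedaEquiv_comp, hq, Equiv.apply_symm_apply]
  · intro h f g w
    obtain ⟨x', hx, hq⟩ := h (yonedaEquiv f) (yonedaEquiv g) (by
      rw [← stdSimplex.yonedaEquiv_δ_comp, ← w, yonedaEquiv_comp])
    refine ⟨yonedaEquiv.symm x', ?_, ?_⟩
    · rw [stdSimplex.δ_comp_yonedaEquiv_symm, hx, Equiv.symm_apply_apply]
    · rw [yonedaEquiv_symm_comp, hq, Equiv.symm_apply_apply]

noncomputable def hornOneIso {i j : Fin 2} (hij : j ≠ i) : (Λ[1, i] : SSet) ≅ Δ[0] where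
  hom := stdSimplex.isTerminalObj₀.from _
  inv := horn.ι i j hij
  hom_inv_id := by
    refine horn.hom_ext' fun k hk => ?_
    obtain rfl : k = j := by omega
    rw [Category.comp_id, ← Category.assoc,
      stdSimplex.isTerminalObj₀.hom_ext (horn.ι i k hk ≫ _) (𝟙 _), Category.id_comp]
  inv_hom_id := stdSimplex.isTerminalObj₀.hom_ext _ _

noncomputable def hornOneArrowIso {i j : Fin 2} (hij : j ≠ i) :
    Arrow.mk Λ[1, i].ι ≅ Arrow.mk (stdSimplex.δ j) :=
  Arrow.isoMk (hornOneIso hij) (Iso.refl _) (by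
    dsimp only [Arrow.mk_hom, Iso.refl_hom]
    rw [Category.comp_id, ← (hornOneIso hij).hom_inv_id_assoc Λ[1, i].ι]
    exact congrArg _ (horn.ι_ι i j hij))

theorem hasLiftingProperty_horn_one_iff {X Y : SSet} (q : X ⟶ Y) {i j : Fin 2} (hij : j ≠ i) :
    HasLiftingProperty Λ[1, i].ι q ↔
      ∀ (x : X _⦋0⦌) (g : Y _⦋1⦌), Y.δ j g = q.app _ x →
        ∃ x' : X _⦋1⦌, X.δ j x' = x ∧ q.app _ x' = g :=
  (HasLiftingProperty.iff_of_arrow_iso_left (hornOneArrowIso hij) q).trans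
    (hasLiftingProperty_stdSimplex_δ_iff j q)

end SSet

theorem isFibration_iff_hasLiftingProperty {X Y : SSet} (q : X ⟶ Y) :
    IsFibration q ↔ ∀ (n : ℕ) (i : Fin (n + 2)), HasLiftingProperty Λ[n + 1, i].ι q := by
  simp only [IsFibration, hasLiftingProperty_iff_exists_lift]

/-- if `Y` is (the nerve of) a 1-groupoid, then `q : X ⟶ Y` is a simplicial
fibration iff `X` is a Kan complex and the face maps `d_1, d_0 : X_1 → X_0` are fiber-wise
surjective. -/
theorem stmt19 {X Y : SSet} (q : X ⟶ Y)
    (hY1 : ∀ (n : ℕ) (i : Fin (n + 2)) (h : (Λ[n + 1, i] : SSet) ⟶ Y),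
      ∃ y : Δ[n + 1] ⟶ Y, Λ[n + 1, i].ι ≫ y = h)
    (hY2 : ∀ (n : ℕ) (i : Fin (n + 3)) (h : (Λ[n + 2, i] : SSet) ⟶ Y),
      ∃! y : Δ[n + 2] ⟶ Y, Λ[n + 2, i].ι ≫ y = h) :
    IsFibration q ↔
      ((∀ (n : ℕ) (i : Fin (n + 2)) (h : (Λ[n + 1, i] : SSet) ⟶ X),
          ∃ x : Δ[n + 1] ⟶ X, Λ[n + 1, i].ι ≫ x = h) ∧
       (∀ (x : X.obj (Opposite.op (SimplexCategory.mk 0)))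
          (g : Y.obj (Opposite.op (SimplexCategory.mk 1))),
          Y.map (SimplexCategory.δ (1 : Fin 2)).op g =
            q.app (Opposite.op (SimplexCategory.mk 0)) x →
          ∃ x' : X.obj (Opposite.op (SimplexCategory.mk 1)),
            X.map (SimplexCategory.δ (1 : Fin 2)).op x' = x ∧
            q.app (Opposite.op (SimplexCategory.mk 1)) x' = g) ∧
       (∀ (x : X.obj (Opposite.op (SimplexCategory.mk 0)))
          (g : Y.obj (Opposite.op (SimplexCategory.mk 1))),
          Y.map (SimplexCategory.δ (0 : Fin 2)).op g =
            q.app (Opposite.op (SimplexCategory.mk 0)) x →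
          ∃ x' : X.obj (Opposite.op (SimplexCategory.mk 1)),
            X.map (SimplexCategory.δ (0 : Fin 2)).op x' = x ∧
            q.app (Opposite.op (SimplexCategory.mk 1)) x' = g)) := by
  rw [isFibration_iff_hasLiftingProperty]
  constructor
  · intro hfib
    refine ⟨fun n i => ?_, (hasLiftingProperty_horn_one_iff q (i := 0) (by decide)).1 (hfib 0 0),
      (hasLiftingProperty_horn_one_iff q (i := 1) (by decide)).1 (hfib 0 1)⟩
    have := hfib n i
    exact exists_extension_of_hasLiftingProperty q (hY1 n i)
  · rintro ⟨hKan, hlift₁, hlift₀⟩ n i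
    rcases n with _ | n
    · fin_cases i
      · exact (hasLiftingProperty_horn_one_iff q (j := 1) (by decide)).2 hlift₁
      · exact (hasLiftingProperty_horn_one_iff q (j := 0) (by decide)).2 hlift₀
    · exact hasLiftingProperty_of_exists_extension q (hKan _ i)
        fun g g' h => (hY2 n i _).unique h rfl
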